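/- arXiv:1001.3528 — 5 statements merged into one kernel-verified Lean document; each statement's English description precedes it below -/
import Mathlib

section
/- For every θ ∈ (0, π), the function f_θ is differentiable on ℝ with derivative f_θ′(x) = sin θ / (2·(cosh x − cos θ)) at every x ∈ ℝ, and this derivative is strictly positive. -/
/-!
With `w = exp (x + θ i)` we have `f_θ = -Im (log (1 - w))`, and `1 - w` stays off the branch cut
of `log` because `Im (1 - w) = -eˣ sin θ ≠ 0`. Hence `f_θ'(x) = Im (w / (1 - w)) = eˣ sin θ / |1 - w|²`
with `|1 - w|² = 2 eˣ (cosh x - cos θ)`; positivity follows from `sin θ > 0` and `cos θ < 1 ≤ cosh x`.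
-/

/-- The function `f_θ(x) = −arg(1 − exp(x + iθ))`, realizing the paper's
`f_θ(x) = (1/(2i))·log((1 − e^{x−iθ})/(1 − e^{x+iθ}))` with the branch of the
logarithm chosen so that `0 < f_θ < π`. -/
noncomputable def fAngle (θ x : ℝ) : ℝ :=
  -Complex.arg (1 - Complex.exp (x + θ * Complex.I))

open Complex

theorem HasDerivAt.carg_real {f : ℝ → ℂ} {f' : ℂ} {x : ℝ} (hf : HasDerivAt f f' x)
    (hx : f x ∈ slitPlane) : HasDerivAt (fun t => arg (f t)) (f' / f x).im x := by
  simp only [← log_im]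
  exact imCLM.hasFDerivAt.comp_hasDerivAt x (hf.clog_real hx)

theorem Real.cos_lt_cosh_of_sin_ne_zero {θ : ℝ} (hθ : Real.sin θ ≠ 0) (x : ℝ) :
    Real.cos θ < Real.cosh x := by
  have hcos : Real.cos θ < 1 := by
    nlinarith [Real.sin_sq_add_cos_sq θ, sq_pos_of_ne_zero hθ]
  linarith [Real.one_le_cosh x]

theorem Complex.one_sub_exp_mem_slitPlane {x θ : ℝ} (hθ : Real.sin θ ≠ 0) :
    1 - exp (x + θ * I) ∈ slitPlane := by
  refine mem_slitPlane_iff.2 (Or.inr ?_)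
  simpa [exp_im] using mul_ne_zero (Real.exp_pos x).ne' hθ

-- Holds unconditionally: at `w = 1` both sides are the junk value `0`.
theorem Complex.im_exp_div_one_sub_exp (x θ : ℝ) :
    (exp (x + θ * I) / (1 - exp (x + θ * I))).im =
      Real.sin θ / (2 * (Real.cosh x - Real.cos θ)) := by
  set w := exp (x + θ * I)
  have hre : w.re = Real.exp x * Real.cos θ := by simp [w, exp_re]
  have him : w.im = Real.exp x * Real.sin θ := by simp [w, exp_im]
  have hnormSq : normSq (1 - w) = 2 * Real.exp x * (Real.cosh x - Real.cos θ) := by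
    rw [normSq_apply, sub_re, sub_im, one_re, one_im, hre, him, Real.cosh_eq, Real.exp_neg]
    field_simp
    linear_combination (Real.exp x) ^ 2 * Real.sin_sq_add_cos_sq θ
  rw [div_im, hnormSq, sub_re, sub_im, one_re, one_im, hre, him]
  field_simp
  ring

theorem fAngle_hasDerivAt (θ : ℝ) (hθ₀ : 0 < θ) (hθπ : θ < Real.pi) (x : ℝ) :
    HasDerivAt (fun t : ℝ => fAngle θ t)
      (Real.sin θ / (2 * (Real.cosh x - Real.cos θ))) x ∧
    0 < Real.sin θ / (2 * (Real.cosh x - Real.cos θ)) := by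
  have hsin : 0 < Real.sin θ := Real.sin_pos_of_pos_of_lt_pi hθ₀ hθπ
  have hcosh : Real.cos θ < Real.cosh x := Real.cos_lt_cosh_of_sin_ne_zero hsin.ne' x
  refine ⟨?_, div_pos hsin (by linarith)⟩
  have hexp : HasDerivAt (fun t : ℝ => exp (t + θ * I)) (exp (x + θ * I)) x := by
    simpa using (ofRealCLM.hasDerivAt (x := x)).add_const (θ * I) |>.cexp
  have harg := (hexp.const_sub 1).carg_real (one_sub_exp_mem_slitPlane (x := x) hsin.ne')
  rw [neg_div, neg_im, im_exp_div_one_sub_exp x θ] at harg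
  rw [← neg_neg (Real.sin θ / _)]
  exact harg.neg
end

section
/- For every θ ∈ (0, π) and every x ∈ ℝ, the function f_θ satisfies the functional equation f_θ(x) + f_θ(−x) = π − θ. -/
/-!
Put `w = 1 - e^{x+iθ}`. Then `1 - e^{-x+iθ} = e^{-x} · (-e^{iθ}) · conj w`. Since `w` lies in the
lower half-plane, `arg (conj w) = -arg w ∈ (0, π)`, and `arg (-e^{iθ}) = θ - π`; the sum of these
two arguments stays in `(-π, π)`, so `arg (1 - e^{-x+iθ}) = θ - π - arg w`.
-/

open Complex Real ComplexConjugate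

namespace Complex

theorem one_sub_exp_neg_add_mul_I (x θ : ℝ) :
    1 - exp (↑(-x) + θ * I) = ↑(Real.exp (-x)) * (-exp (θ * I) * conj (1 - exp (x + θ * I))) := by
  have hconj : conj (1 - exp (x + θ * I)) = 1 - exp x * exp (-(θ * I)) := by
    rw [map_sub, map_one, ← exp_conj, map_add, map_mul, conj_ofReal, conj_ofReal, conj_I, mul_neg,
      exp_add]
  rw [hconj, ofReal_exp, ofReal_neg, exp_add, exp_neg (θ * I), exp_neg (x : ℂ)]
  field_simp
  ring

theorem arg_neg_exp_mul_I {θ : ℝ} (hθ₀ : 0 < θ) (hθ : θ ≤ 2 * π) :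
    arg (-exp (θ * I)) = θ - π := by
  have : -exp (θ * I) = exp (↑(θ - π) * I) := by
    rw [ofReal_sub, sub_mul, exp_sub, exp_pi_mul_I, div_neg, div_one]
  rw [this, arg_exp_mul_I, toIocMod_eq_self]
  constructor <;> linarith

theorem im_one_sub_exp_add_mul_I (x θ : ℝ) :
    (1 - exp (x + θ * I)).im = -(Real.exp x * Real.sin θ) := by
  simp [exp_im]

theorem arg_one_sub_exp_add_mul_I_neg {θ : ℝ} (hθ₀ : 0 < θ) (hθπ : θ < π) (x : ℝ) :
    arg (1 - exp (x + θ * I)) < 0 := by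
  rw [arg_neg_iff, im_one_sub_exp_add_mul_I, neg_lt_zero]
  exact mul_pos (Real.exp_pos x) (sin_pos_of_pos_of_lt_pi hθ₀ hθπ)

theorem arg_one_sub_exp_neg_add_mul_I {θ : ℝ} (hθ₀ : 0 < θ) (hθπ : θ < π) (x : ℝ) :
    arg (1 - exp (↑(-x) + θ * I)) = θ - π - arg (1 - exp (x + θ * I)) := by
  set w := 1 - exp (x + θ * I)
  have hw : arg w < 0 := arg_one_sub_exp_add_mul_I_neg hθ₀ hθπ x
  have hw₀ : w ≠ 0 := by rintro h; simp [h] at hw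
  have harg_exp : arg (-exp (θ * I)) = θ - π := arg_neg_exp_mul_I hθ₀ (by linarith)
  have harg_conj : arg (conj w) = -arg w := by rw [arg_conj, if_neg (by linarith [pi_pos])]
  have hsum : arg (-exp (θ * I)) + arg (conj w) ∈ Set.Ioc (-π) π := by
    rw [harg_exp, harg_conj]
    constructor <;> linarith [neg_pi_lt_arg w]
  rw [one_sub_exp_neg_add_mul_I, arg_real_mul _ (Real.exp_pos _),
    arg_mul (neg_ne_zero.mpr (exp_ne_zero _)) ((map_ne_zero _).mpr hw₀) hsum, harg_exp, harg_conj]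
  ring

end Complex

theorem fAngle_functional_equation (θ : ℝ) (hθ₀ : 0 < θ) (hθπ : θ < Real.pi) (x : ℝ) :
    fAngle θ x + fAngle θ (-x) = Real.pi - θ := by
  rw [fAngle, fAngle, arg_one_sub_exp_neg_add_mul_I hθ₀ hθπ x]
  ring
end

section
/- For every θ ∈ (0, π) and all r₀, r > 0, one has arg(r₀ + r·exp(i(π − θ))) = f_θ(log r − log r₀). (Geometrically: in the kite formed by two circles of radii r₀ and r intersecting at exterior angle θ — the quadrilateral bounded by the two centers and the two intersection points — the angle of the kite at the center of the circle of radius r₀ equals 2·f_θ(log r − log r₀).) -/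
open Complex ComplexConjugate

lemma Complex.im_one_sub_exp_add_mul_I_s3 (x θ : ℝ) :
    (1 - exp (x + θ * I)).im = -(Real.exp x * Real.sin θ) := by
  rw [sub_im, one_im, exp_add, ← ofReal_exp, im_ofReal_mul, exp_ofReal_mul_I_im]
  ring

lemma Complex.conj_one_sub_exp_add_mul_I (x θ : ℝ) :
    conj (1 - exp (x + θ * I)) = 1 - exp (x - θ * I) := by
  rw [map_sub, map_one, ← exp_conj, map_add, map_mul, conj_ofReal, conj_ofReal, conj_I]
  ring_nf

lemma fAngle_eq_arg_one_sub_exp {θ : ℝ} (hθ : Real.sin θ ≠ 0) (x : ℝ) :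
    fAngle θ x = arg (1 - exp (x - θ * I)) := by
  have him : (1 - exp (x + θ * I)).im ≠ 0 := by
    rw [im_one_sub_exp_add_mul_I_s3]
    exact neg_ne_zero.mpr (mul_ne_zero (Real.exp_pos x).ne' hθ)
  rw [fAngle, ← conj_one_sub_exp_add_mul_I, arg_conj,
    if_neg fun h => him (arg_eq_pi_iff.mp h).2]

lemma Complex.ofReal_add_mul_exp_pi_sub {r₀ : ℝ} (r θ : ℝ) (hr₀ : 0 < r₀) (hr : 0 < r) :
    (r₀ : ℂ) + r * exp (I * ((Real.pi - θ : ℝ) : ℂ)) =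
      r₀ * (1 - exp ((Real.log r - Real.log r₀ : ℝ) - θ * I)) := by
  have hexp : exp (Real.log r - Real.log r₀ : ℝ) = r / r₀ := by
    rw [← ofReal_exp, Real.exp_sub, Real.exp_log hr, Real.exp_log hr₀, ofReal_div]
  have hr₀' : (r₀ : ℂ) ≠ 0 := ofReal_ne_zero.mpr hr₀.ne'
  have hrot : exp (I * ((Real.pi - θ : ℝ) : ℂ)) = -exp (-(θ * I)) := by
    rw [ofReal_sub, show I * (Real.pi - θ) = Real.pi * I + -(θ * I) by ring, exp_add,
      exp_pi_mul_I, neg_one_mul]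
  rw [hrot, exp_sub, hexp, exp_neg]
  field_simp
  ring

theorem fAngle_kite_angle (θ : ℝ) (hθ₀ : 0 < θ) (hθπ : θ < Real.pi)
    (r₀ r : ℝ) (hr₀ : 0 < r₀) (hr : 0 < r) :
    Complex.arg ((r₀ : ℂ) + (r : ℂ) * Complex.exp (Complex.I * ((Real.pi - θ : ℝ) : ℂ))) =
      fAngle θ (Real.log r - Real.log r₀) := by
  rw [ofReal_add_mul_exp_pi_sub r θ hr₀ hr, arg_real_mul _ hr₀,
    fAngle_eq_arg_one_sub_exp (Real.sin_pos_of_pos_of_lt_pi hθ₀ hθπ).ne']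
end

section
/- Let α ∈ (0, π), x ∈ ℝ and y > 0, and assume eˣ ≥ cos α and y·eˣ ≥ cos α. Then f_α(x + log y) ≤ f_α(x) + (sin α / (2·(cosh x − cos α)))·(y − 1). (This is the second-order Taylor estimate, with nonpositive remainder, used in the proof of the subharmonicity Proposition 5.7.) -/
/-!
With `c = exp (x + α i)` one has `fAngle α (x + log t) = -arg (1 - t c)`, whose derivative in `t`
is `Im c / |1 - t c|²`. As `|1 - t c|² = 1 - 2 t Re c + t² |c|²` increases on the half-line
`Re c ≤ |c|² t`, the function `t ↦ -arg (1 - t c)` is concave there, and the hypotheses say exactly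
that `1` and `y` lie on this half-line. The estimate is the tangent-line inequality at `t = 1`,
with slope `eˣ sin α / |1 - exp (x + α i)|² = sin α / (2 (cosh x - cos α))`.
-/

open Complex

lemma ConcaveOn.le_add_mul_sub_of_hasDerivAt {S : Set ℝ} {f : ℝ → ℝ} {x y f' : ℝ}
    (hf : ConcaveOn ℝ S f) (hx : x ∈ S) (hy : y ∈ S) (hf' : HasDerivAt f f' x) :
    f y ≤ f x + f' * (y - x) := by
  rcases lt_trichotomy x y with hxy | rfl | hyx
  · have := hf.slope_le_of_hasDerivAt hx hy hxy hf'
    rw [slope_def_field, div_le_iff₀ (sub_pos.2 hxy)] at this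
    linarith
  · simp
  · have := hf.le_slope_of_hasDerivAt hy hx hyx hf'
    rw [slope_def_field, le_div_iff₀ (sub_pos.2 hyx)] at this
    linarith

namespace Complex

lemma normSq_one_sub_ofReal_mul (c : ℂ) (t : ℝ) :
    normSq (1 - t * c) = 1 - 2 * c.re * t + normSq c * t ^ 2 := by
  simp only [normSq_apply, sub_re, sub_im, one_re, one_im, re_ofReal_mul, im_ofReal_mul]
  ring

lemma one_sub_ofReal_mul_mem_slitPlane {c : ℂ} (hc : c.im ≠ 0) (t : ℝ) :
    1 - t * c ∈ slitPlane := by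
  rcases eq_or_ne t 0 with rfl | ht
  · simp
  · exact mem_slitPlane_iff.2 (Or.inr (by simp [ht, hc]))

lemma hasDerivAt_neg_arg_one_sub_ofReal_mul {c : ℂ} (hc : c.im ≠ 0) (t : ℝ) :
    HasDerivAt (fun s : ℝ => -arg (1 - s * c)) (c.im / normSq (1 - t * c)) t := by
  have hslit := one_sub_ofReal_mul_mem_slitPlane hc t
  have hlin : HasDerivAt (fun s : ℝ => 1 - (s : ℂ) * c) (-c) t := by
    simpa using ((hasDerivAt_id (t : ℂ)).comp_ofReal.mul_const c).const_sub 1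
  have hlog : HasDerivAt (fun s : ℝ => -(log (1 - s * c)).im) (-(-c / (1 - t * c)).im) t :=
    (imCLM.hasFDerivAt.comp_hasDerivAt t (hlin.clog_real hslit)).neg
  simp only [log_im] at hlog
  convert hlog using 1
  have hN : normSq (1 - t * c) ≠ 0 := (normSq_pos.2 (slitPlane_ne_zero hslit)).ne'
  simp only [neg_div, neg_im, neg_neg, div_im, sub_re, sub_im, one_re, one_im,
    re_ofReal_mul, im_ofReal_mul]
  field_simp
  ring

lemma monotoneOn_normSq_one_sub_ofReal_mul (c : ℂ) :
    MonotoneOn (fun t : ℝ => normSq (1 - t * c)) {t | c.re ≤ normSq c * t} := by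
  intro s hs t ht hst
  simp only [Set.mem_ofPred_eq] at hs ht
  simp only [normSq_one_sub_ofReal_mul]
  nlinarith

lemma concaveOn_neg_arg_one_sub_ofReal_mul {c : ℂ} (hc : 0 < c.im) :
    ConcaveOn ℝ {t | c.re ≤ normSq c * t} (fun t : ℝ => -arg (1 - t * c)) := by
  have hderiv := hasDerivAt_neg_arg_one_sub_ofReal_mul hc.ne'
  have hconvex : Convex ℝ {t : ℝ | c.re ≤ normSq c * t} :=
    Set.OrdConnected.convex
      ⟨fun _ hs _ _ _ ht => le_trans hs (mul_le_mul_of_nonneg_left ht.1 (normSq_nonneg c))⟩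
  refine AntitoneOn.concaveOn_of_deriv hconvex
    (fun t _ => (hderiv t).continuousAt.continuousWithinAt)
    (fun t _ => (hderiv t).differentiableAt.differentiableWithinAt) ?_
  intro s hs t ht hst
  have hpos : ∀ u : ℝ, 0 < normSq (1 - u * c) := fun u =>
    normSq_pos.2 (slitPlane_ne_zero (one_sub_ofReal_mul_mem_slitPlane hc.ne' u))
  simp only [(hderiv _).deriv]
  exact div_le_div_of_nonneg_left hc.le (hpos s)
    (monotoneOn_normSq_one_sub_ofReal_mul c (interior_subset hs) (interior_subset ht) hst)

lemma normSq_one_sub_exp (θ x : ℝ) :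
    normSq (1 - exp (x + θ * I)) = 2 * Real.exp x * (Real.cosh x - Real.cos θ) := by
  have hcosh : 2 * Real.exp x * Real.cosh x = Real.exp x * Real.exp x + 1 := by
    rw [Real.cosh_eq, Real.exp_neg]
    field_simp
  have hre : (exp (x + θ * I)).re = Real.exp x * Real.cos θ := by simp [exp_re]
  have him : (exp (x + θ * I)).im = Real.exp x * Real.sin θ := by simp [exp_im]
  rw [normSq_apply, sub_re, sub_im, one_re, one_im, hre, him]
  linear_combination Real.exp x ^ 2 * Real.sin_sq_add_cos_sq θ - hcosh

end Complex

lemma fAngle_add_log (θ x : ℝ) {y : ℝ} (hy : 0 < y) :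
    fAngle θ (x + Real.log y) = -arg (1 - y * exp (x + θ * I)) := by
  rw [fAngle, ofReal_add, add_right_comm, exp_add, ← ofReal_exp, Real.exp_log hy, mul_comm]

theorem fAngle_taylor_estimate (α x y : ℝ) (hα₀ : 0 < α) (hαπ : α < Real.pi)
    (hy : 0 < y) (h₁ : Real.cos α ≤ Real.exp x) (h₂ : Real.cos α ≤ y * Real.exp x) :
    fAngle α (x + Real.log y) ≤
      fAngle α x + Real.sin α / (2 * (Real.cosh x - Real.cos α)) * (y - 1) := by
  set c := exp (x + α * I)
  have hc_re : c.re = Real.exp x * Real.cos α := by simp [c, exp_re]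
  have hc_im : c.im = Real.exp x * Real.sin α := by simp [c, exp_im]
  have hc_normSq : normSq c = Real.exp x * Real.exp x := by
    simp [c, normSq_eq_norm_sq, norm_exp, sq]
  have hS : ∀ t, Real.cos α ≤ t * Real.exp x → c.re ≤ normSq c * t := fun t ht => by
    rw [hc_re, hc_normSq, mul_assoc]
    exact mul_le_mul_of_nonneg_left (by linarith) (Real.exp_pos x).le
  have hc : 0 < c.im := by
    rw [hc_im]; exact mul_pos (Real.exp_pos x) (Real.sin_pos_of_pos_of_lt_pi hα₀ hαπ)
  have key := (concaveOn_neg_arg_one_sub_ofReal_mul hc).le_add_mul_sub_of_hasDerivAt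
    (hS 1 (by simpa using h₁)) (hS y h₂) (hasDerivAt_neg_arg_one_sub_ofReal_mul hc.ne' 1)
  have hslope :
      c.im / normSq (1 - (1 : ℝ) * c) = Real.sin α / (2 * (Real.cosh x - Real.cos α)) := by
    rw [ofReal_one, one_mul, normSq_one_sub_exp, hc_im, mul_assoc, mul_left_comm,
      mul_div_mul_left _ _ (Real.exp_pos x).ne']
  rw [fAngle_add_log α x hy, ← hslope]
  simpa [fAngle] using key
end

section
/- Define the cross-ratio of four complex numbers by q(z₁, z₂, z₃, z₄) = ((z₁ − z₂)(z₃ − z₄)) / ((z₂ − z₃)(z₄ − z₁)). Let f : ℂ → ℂ be complex differentiable at z₀ with derivative d ≠ 0. Then q(f(z₀), f(z₀ + ε), f(z₀ + ε + iε), f(z₀ + iε)) tends to −1 as the real parameter ε tends to 0 with ε ≠ 0. (This is the smooth characterization motivating the definition of discrete conformal maps: the elementary quadrilaterals of a conformal map are, in the limit, conformal squares with cross-ratio −1.) -/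
/-- The cross-ratio of four complex numbers. -/
noncomputable def crossRatio (z₁ z₂ z₃ z₄ : ℂ) : ℂ :=
  ((z₁ - z₂) * (z₃ - z₄)) / ((z₂ - z₃) * (z₄ - z₁))

open Filter Topology Complex

/-! Translating by `f z₀` and dividing by `ε` leave the cross-ratio unchanged and turn the four
points into difference quotients of `f` in the directions `0, 1, 1 + i, i`. These converge to the
vertices `0, d, d + i d, i d` of a square, where the cross-ratio is continuous because `d ≠ 0`,
and every square has cross-ratio `-1`. -/

theorem crossRatio_sub_div (z₁ z₂ z₃ z₄ w : ℂ) {c : ℂ} (hc : c ≠ 0) :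
    crossRatio ((z₁ - w) / c) ((z₂ - w) / c) ((z₃ - w) / c) ((z₄ - w) / c) =
      crossRatio z₁ z₂ z₃ z₄ := by
  simp only [crossRatio, div_sub_div_same, sub_sub_sub_cancel_right, div_mul_div_comm]
  rw [div_div_div_cancel_right₀ (mul_ne_zero hc hc)]

theorem crossRatio_square (z v : ℂ) (hv : v ≠ 0) :
    crossRatio z (z + v) (z + v + I * v) (z + I * v) = -1 := by
  have hIv : I * v ≠ 0 := mul_ne_zero I_ne_zero hv
  rw [crossRatio, div_eq_iff (by simpa using mul_ne_zero hIv hIv)]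
  linear_combination -(v * v) * I_sq

theorem Filter.Tendsto.crossRatio {α : Type*} {l : Filter α} {g₁ g₂ g₃ g₄ : α → ℂ}
    {z₁ z₂ z₃ z₄ : ℂ} (h₁ : Tendsto g₁ l (𝓝 z₁)) (h₂ : Tendsto g₂ l (𝓝 z₂))
    (h₃ : Tendsto g₃ l (𝓝 z₃)) (h₄ : Tendsto g₄ l (𝓝 z₄)) (h₂₃ : z₂ ≠ z₃) (h₄₁ : z₄ ≠ z₁) :
    Tendsto (fun x => _root_.crossRatio (g₁ x) (g₂ x) (g₃ x) (g₄ x)) l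
      (𝓝 (_root_.crossRatio z₁ z₂ z₃ z₄)) :=
  ((h₁.sub h₂).mul (h₃.sub h₄)).div ((h₂.sub h₃).mul (h₄.sub h₁))
    (mul_ne_zero (sub_ne_zero.2 h₂₃) (sub_ne_zero.2 h₄₁))

theorem HasDerivAt.tendsto_inv_smul_sub_ofReal_mul {E : Type*} [NormedAddCommGroup E]
    [NormedSpace ℂ E] {f : ℂ → E} {d : E} {z₀ : ℂ} (hf : HasDerivAt f d z₀) (a : ℂ) :
    Tendsto (fun ε : ℝ => ε⁻¹ • (f (z₀ + ε * a) - f z₀)) (𝓝[≠] 0) (𝓝 (a • d)) := by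
  have hray : HasDerivAt (fun ε : ℝ => z₀ + ε * a) a 0 := by
    simpa using ((hasDerivAt_id (0 : ℝ)).ofReal_comp.mul_const a).const_add z₀
  have hcomp := HasDerivAt.scomp (0 : ℝ) (by simpa using hf) hray
  simpa [Function.comp_def] using hasDerivAt_iff_tendsto_slope_zero.1 hcomp

theorem crossRatio_tendsto_neg_one (f : ℂ → ℂ) (z₀ d : ℂ)
    (hf : HasDerivAt f d z₀) (hd : d ≠ 0) :
    Filter.Tendsto
      (fun ε : ℝ => crossRatio (f z₀) (f (z₀ + ε)) (f (z₀ + ε + Complex.I * ε))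
        (f (z₀ + Complex.I * ε)))
      (nhdsWithin 0 {0}ᶜ) (nhds (-1)) := by
  have hId : I * d ≠ 0 := mul_ne_zero I_ne_zero hd
  have hq := hf.tendsto_inv_smul_sub_ofReal_mul
  have hlim := (hq 0).crossRatio (hq 1) (hq (1 + I)) (hq I)
    (by simpa [add_mul] using hId) (by simpa using hId)
  have hsq : crossRatio ((0 : ℂ) • d) ((1 : ℂ) • d) ((1 + I) • d) (I • d) = -1 := by
    simpa [add_mul] using crossRatio_square 0 d hd
  rw [hsq] at hlim
  refine hlim.congr' ?_
  filter_upwards [self_mem_nhdsWithin] with ε hε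
  simp only [real_smul, ofReal_inv, inv_mul_eq_div]
  rw [crossRatio_sub_div _ _ _ _ _ (ofReal_ne_zero.2 hε)]
  congr 2 <;> ring_nf
end
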